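/- arXiv:1108.3415 — 2 statements merged into one kernel-verified Lean document; each statement's English description precedes it below -/
import Mathlib

section
/- Let p = Mf + 1 be an odd prime with M ≥ 4 even and f odd, and let U = {X_0, …, X_{M−1}} be the (p, M, M)-FHS set of Construction A (X_i(0) = i and X_i(t) = r + i (mod M) whenever t ∈ C_r, with C_r the cyclotomic classes of order M in F_p). For 0 ≤ i ≤ M/2 − 1 define Y_i : Z_{2p} → Z_M by Y_i(2t_1 + t_0) = X_{2i + t_0}(t_1) for 0 ≤ t_0 ≤ 1 and 0 ≤ t_1 ≤ p−1. Then Y = {Y_0, …, Y_{M/2−1}} is a (2p, M, M/2)-FHS set with optimal AHC: A_a(Y)/(2p(M/2 − 1)) + A_c(Y)/(2p − 1) = (2p·(M/2) − M)/(M(2p−1)(M/2 − 1)). -/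
open Finset

/-- Periodic Hamming correlation of two FHSs `X, Y : ZMod N → F` at shift `τ`. -/
def Hcorr {N : ℕ} [NeZero N] {F : Type*} [DecidableEq F]
    (X Y : ZMod N → F) (τ : ZMod N) : ℕ :=
  (Finset.univ.filter (fun t => X t = Y (t + τ))).card

/-- `N_X(a)`: number of occurrences of frequency `a` in the FHS `X`. -/
def countFreq {N : ℕ} [NeZero N] {F : Type*} [DecidableEq F]
    (X : ZMod N → F) (a : F) : ℕ :=
  (Finset.univ.filter (fun t => X t = a)).card

/-- `N_U(a)`: total number of occurrences of `a` in the FHS set `U`. -/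
def countFreqSet {N L : ℕ} [NeZero N] {F : Type*} [DecidableEq F]
    (U : Fin L → ZMod N → F) (a : F) : ℕ :=
  ∑ i : Fin L, countFreq (U i) a

/-- `S_a(U)`: sum of all out-of-phase Hamming autocorrelation values. -/
def Sa {N L : ℕ} [NeZero N] {F : Type*} [DecidableEq F]
    (U : Fin L → ZMod N → F) : ℕ :=
  ∑ i : Fin L, ∑ τ ∈ Finset.univ \ {(0 : ZMod N)}, Hcorr (U i) (U i) τ

/-- `S_c(U)`: sum of all Hamming crosscorrelation values (ordered pairs `i ≠ j`). -/
def Sc {N L : ℕ} [NeZero N] {F : Type*} [DecidableEq F]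
    (U : Fin L → ZMod N → F) : ℕ :=
  ∑ i : Fin L, ∑ j ∈ Finset.univ \ {i}, ∑ τ : ZMod N, Hcorr (U i) (U j) τ

/-- Average Hamming autocorrelation `A_a(U) = S_a(U)/(L(N-1))`. -/
def Aa {N L : ℕ} [NeZero N] {F : Type*} [DecidableEq F]
    (U : Fin L → ZMod N → F) : ℚ :=
  (Sa U : ℚ) / ((L : ℚ) * ((N : ℚ) - 1))

/-- Average Hamming crosscorrelation `A_c(U) = S_c(U)/(L(L-1)N)`. -/
def Ac {N L : ℕ} [NeZero N] {F : Type*} [DecidableEq F]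
    (U : Fin L → ZMod N → F) : ℚ :=
  (Sc U : ℚ) / ((L : ℚ) * ((L : ℚ) - 1) * (N : ℚ))

/-- `H_a(U)`: maximum out-of-phase Hamming autocorrelation of the set `U`. -/
def Ha {N L : ℕ} [NeZero N] {F : Type*} [DecidableEq F]
    (U : Fin L → ZMod N → F) : ℕ :=
  Finset.univ.sup fun i => (Finset.univ \ {(0 : ZMod N)}).sup fun τ => Hcorr (U i) (U i) τ

/-- `H_c(U)`: maximum Hamming crosscorrelation of the set `U`. -/
def Hc {N L : ℕ} [NeZero N] {F : Type*} [DecidableEq F]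
    (U : Fin L → ZMod N → F) : ℕ :=
  Finset.univ.sup fun i => (Finset.univ \ {i}).sup fun j =>
    Finset.univ.sup fun τ => Hcorr (U i) (U j) τ

/-- `U` has optimal average Hamming correlation (meets the Peng et al. AHC bound with equality). -/
def optimalAHC {N L : ℕ} [NeZero N] {F : Type*} [Fintype F] [DecidableEq F]
    (U : Fin L → ZMod N → F) : Prop :=
  Aa U / ((N : ℚ) * ((L : ℚ) - 1)) + Ac U / ((N : ℚ) - 1)
    = ((N : ℚ) * L - Fintype.card F) /
      ((Fintype.card F : ℚ) * ((N : ℚ) - 1) * ((L : ℚ) - 1))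

/-- The cyclotomic class `C_r = {α^(Ml+r) : 0 ≤ l ≤ f-1}`. -/
def cycClass {F : Type*} [Monoid F] [DecidableEq F] (α : F) (M f r : ℕ) : Finset F :=
  (Finset.range f).image fun l => α ^ (M * l + r)

/-- The cyclotomic number `(i,j)_M = |(C_i + 1) ∩ C_j|`. -/
def cycNum {F : Type*} [Field F] [DecidableEq F] (α : F) (M f i j : ℕ) : ℕ :=
  (((cycClass α M f i).image fun x => x + 1) ∩ cycClass α M f j).card


lemma Hcorr_self_zero {N : ℕ} [NeZero N] {F : Type*} [DecidableEq F]
    (X : ZMod N → F) : Hcorr X X 0 = N := by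
  simp [Hcorr, Finset.card_univ, ZMod.card]

lemma Hcorr_sum_eq {N : ℕ} [NeZero N] {F : Type*} [Fintype F] [DecidableEq F]
    (X Y : ZMod N → F) :
    ∑ τ : ZMod N, Hcorr X Y τ = ∑ a : F, countFreq X a * countFreq Y a := by
  have h1 : ∑ τ : ZMod N, Hcorr X Y τ = ∑ t : ZMod N, countFreq Y (X t) := by
    simp only [Hcorr, Finset.card_filter]
    rw [Finset.sum_comm]
    refine Finset.sum_congr rfl fun t _ => ?_
    rw [countFreq, Finset.card_filter]
    exact Fintype.sum_equiv (Equiv.addLeft t) _ _ (fun τ => by simp [add_comm, eq_comm])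
  rw [h1, ← Finset.sum_fiberwise Finset.univ X (fun t => countFreq Y (X t))]
  refine Finset.sum_congr rfl fun a _ => ?_
  rw [Finset.sum_congr rfl (fun t ht => by rw [(Finset.mem_filter.1 ht).2]),
    Finset.sum_const, smul_eq_mul]
  rfl

section cyc
variable {p M f : ℕ} [Fact p.Prime]
  {α : ZMod p} (hα : ∀ x : ZMod p, x ≠ 0 → ∃ k : ℕ, α ^ k = x) (hp2 : 2 < p)

include hα hp2 in
lemma alpha_ne_zero : α ≠ 0 := by
  obtain ⟨k, hk⟩ := hα (-1) (by
    intro h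
    have : (1 : ZMod p) = 0 := by linear_combination -h
    exact one_ne_zero this)
  intro h0
  subst h0
  rcases Nat.eq_zero_or_pos k with rfl | hk0
  · simp at hk
    have h2 : ((2:ℕ) : ZMod p) = 0 := by push_cast; linear_combination hk
    rw [ZMod.natCast_eq_zero_iff] at h2
    have := Nat.le_of_dvd (by norm_num) h2
    omega
  · rw [zero_pow (by omega)] at hk
    have : (1 : ZMod p) = 0 := by linear_combination hk
    exact one_ne_zero this

include hα hp2 in
lemma alpha_order : orderOf α = p - 1 := by
  have hα0 := alpha_ne_zero hα hp2
  have hpow : α ^ (p - 1) = 1 := ZMod.pow_card_sub_one_eq_one hα0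
  have hfin : IsOfFinOrder α := isOfFinOrder_iff_pow_eq_one.2 ⟨p - 1, by omega, hpow⟩
  have hopos : 0 < orderOf α := orderOf_pos_iff.2 hfin
  have hdvd : orderOf α ∣ p - 1 := orderOf_dvd_of_pow_eq_one hpow
  have hle : orderOf α ≤ p - 1 := Nat.le_of_dvd (by omega) hdvd
  have hsub : (Finset.univ \ {(0 : ZMod p)}) ⊆ (Finset.range (orderOf α)).image (α ^ ·) := by
    intro x hx
    simp only [Finset.mem_sdiff, Finset.mem_singleton] at hx
    obtain ⟨k, hk⟩ := hα x hx.2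
    refine Finset.mem_image.2 ⟨k % orderOf α, Finset.mem_range.2 (Nat.mod_lt _ hopos), ?_⟩
    simpa using (pow_mod_orderOf α k).trans hk
  have hcard : p - 1 ≤ orderOf α := by
    calc p - 1 = (Finset.univ \ {(0 : ZMod p)}).card := by
          rw [Finset.card_sdiff_of_subset (by simp), Finset.card_univ, ZMod.card]; simp
      _ ≤ ((Finset.range (orderOf α)).image (α ^ ·)).card := Finset.card_le_card hsub
      _ ≤ orderOf α := (Finset.card_image_le).trans (by simp)
  omega

include hα hp2 in
lemma alpha_pow_inj : ∀ a < p - 1, ∀ b < p - 1, α ^ a = α ^ b → a = b := by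
  have hord := alpha_order hα hp2
  intro a ha b hb hab
  by_contra hne
  wlog h : a < b generalizing a b
  · exact this b hb a ha hab.symm (Ne.symm hne) (by omega)
  have hα0 := alpha_ne_zero hα hp2
  have hmul : α ^ a * α ^ (b - a) = α ^ a * 1 := by
    rw [mul_one, ← pow_add]; rw [hab]; congr 1; omega
  have h1 : α ^ (b - a) = 1 := mul_left_cancel₀ (pow_ne_zero _ hα0) hmul
  have hd := orderOf_dvd_of_pow_eq_one h1
  rw [hord] at hd
  have := Nat.le_of_dvd (by omega) hd
  omega
end cyc

lemma exp_lt {M f a r : ℕ} (ha : a < f) (hr : r < M) : M * a + r < M * f := by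
  calc M * a + r < M * (a + 1) := by rw [Nat.mul_add, Nat.mul_one]; omega
    _ ≤ M * f := Nat.mul_le_mul_left M ha

lemma exp_interp {M a b r r' : ℕ} (hM : 0 < M) (hr : r < M) (hr' : r' < M)
    (h : M * a + r = M * b + r') : a = b ∧ r = r' := by
  constructor
  · have := congrArg (· / M) h
    simpa [Nat.mul_add_div hM, Nat.div_eq_of_lt hr, Nat.div_eq_of_lt hr'] using this
  · have := congrArg (· % M) h
    simpa [Nat.mul_add_mod, Nat.mod_eq_of_lt hr, Nat.mod_eq_of_lt hr'] using this

section cyc2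
variable {p M f : ℕ} [Fact p.Prime]
  {α : ZMod p} (hα : ∀ x : ZMod p, x ≠ 0 → ∃ k : ℕ, α ^ k = x) (hp2 : 2 < p)
  (hpMf : p = M * f + 1) (hM : 0 < M) (hf : 0 < f)

include hα hp2 in
lemma zero_notMem_cycClass (r : ℕ) : (0 : ZMod p) ∉ cycClass α M f r := by
  simp only [cycClass, Finset.mem_image, Finset.mem_range, not_exists]
  rintro l ⟨hl, h0⟩
  exact pow_ne_zero _ (alpha_ne_zero hα hp2) h0

include hα hp2 hpMf hM hf in
lemma cycClass_card {r : ℕ} (hr : r < M) : (cycClass α M f r).card = f := by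
  have hMf : p - 1 = M * f := by omega
  rw [cycClass, Finset.card_image_of_injOn, Finset.card_range]
  intro a ha b hb hab
  simp only [Finset.coe_range, Set.mem_Iio] at ha hb
  have := alpha_pow_inj hα hp2 (M * a + r) (hMf ▸ exp_lt ha hr)
    (M * b + r) (hMf ▸ exp_lt hb hr) hab
  exact (exp_interp hM hr hr this).1

include hα hp2 hpMf hM hf in
lemma cycClass_unique {r r' : ℕ} (hr : r < M) (hr' : r' < M) {t : ZMod p}
    (h1 : t ∈ cycClass α M f r) (h2 : t ∈ cycClass α M f r') : r = r' := by
  have hMf : p - 1 = M * f := by omega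
  simp only [cycClass, Finset.mem_image, Finset.mem_range] at h1 h2
  obtain ⟨l, hl, hle⟩ := h1
  obtain ⟨l', hl', hle'⟩ := h2
  have := alpha_pow_inj hα hp2 (M * l + r) (hMf ▸ exp_lt hl hr)
    (M * l' + r') (hMf ▸ exp_lt hl' hr') (hle.trans hle'.symm)
  exact (exp_interp hM hr hr' this).2

include hα hp2 hpMf hM hf in
lemma mem_cycClass_of_ne_zero {t : ZMod p} (ht : t ≠ 0) :
    ∃ r < M, t ∈ cycClass α M f r := by
  obtain ⟨k, hk⟩ := hα t ht
  have hord := alpha_order hα hp2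
  set k' := k % (p - 1) with hk'
  have hlt : k' < p - 1 := Nat.mod_lt _ (by omega)
  have hkk : α ^ k' = t := by rw [hk', ← hord, pow_mod_orderOf]; exact hk
  refine ⟨k' % M, Nat.mod_lt _ hM, ?_⟩
  simp only [cycClass, Finset.mem_image, Finset.mem_range]
  refine ⟨k' / M, ?_, ?_⟩
  · have hMf : p - 1 = M * f := by omega
    rw [hMf] at hlt
    exact Nat.div_lt_of_lt_mul (by omega)
  · rw [Nat.div_add_mod]
    exact hkk
end cyc2

lemma countFreq_U {p M f : ℕ} [NeZero p] [NeZero M] (hp : p.Prime) (hp2 : 2 < p)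
    (hpMf : p = M * f + 1) (hM : 0 < M) (hf : 0 < f)
    {α : ZMod p} (hα : ∀ x : ZMod p, x ≠ 0 → ∃ k : ℕ, α ^ k = x)
    (U : Fin M → ZMod p → ZMod M)
    (hU0 : ∀ i : Fin M, U i 0 = ((i : ℕ) : ZMod M))
    (hUC : ∀ (i : Fin M) (r : ℕ), r < M → ∀ t ∈ cycClass α M f r,
      U i t = (r : ZMod M) + ((i : ℕ) : ZMod M))
    (j : Fin M) (a : ZMod M) :
    countFreq (U j) a = f + (if a = ((j : ℕ) : ZMod M) then 1 else 0) := by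
  haveI : Fact p.Prime := ⟨hp⟩
  set r₀ : ℕ := (a - ((j : ℕ) : ZMod M)).val with hr₀def
  have hr₀ : r₀ < M := ZMod.val_lt _
  have hcast : ((r₀ : ℕ) : ZMod M) = a - ((j : ℕ) : ZMod M) := by
    simp [hr₀def, ZMod.natCast_val, ZMod.cast_id]
  have hval : ∀ t ∈ cycClass α M f r₀, U j t = a := by
    intro t ht
    rw [hUC j r₀ hr₀ t ht, hcast, sub_add_cancel]
  have key : Finset.univ.filter (fun t => U j t = a)
      = if a = ((j : ℕ) : ZMod M) then insert (0 : ZMod p) (cycClass α M f r₀)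
        else cycClass α M f r₀ := by
    split_ifs with hcase <;> ext t <;>
      simp only [Finset.mem_filter, Finset.mem_univ, true_and, Finset.mem_insert]
    · constructor
      · intro hUt
        rcases eq_or_ne t 0 with rfl | ht0
        · exact Or.inl rfl
        · obtain ⟨r, hr, hmem⟩ := mem_cycClass_of_ne_zero hα hp2 hpMf hM hf ht0
          have : ((r : ℕ) : ZMod M) = ((r₀ : ℕ) : ZMod M) := by
            rw [hcast]
            have := hUC j r hr t hmem
            rw [this] at hUt
            linear_combination hUt
          have : r = r₀ := by
            have h2 := congrArg ZMod.val this
            rwa [ZMod.val_cast_of_lt hr, ZMod.val_cast_of_lt hr₀] at h2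
          subst this
          exact Or.inr hmem
      · rintro (rfl | hmem)
        · rw [hU0 j]; exact hcase.symm
        · exact hval t hmem
    · constructor
      · intro hUt
        rcases eq_or_ne t 0 with rfl | ht0
        · exact absurd (hU0 j ▸ hUt).symm hcase
        · obtain ⟨r, hr, hmem⟩ := mem_cycClass_of_ne_zero hα hp2 hpMf hM hf ht0
          have : ((r : ℕ) : ZMod M) = ((r₀ : ℕ) : ZMod M) := by
            rw [hcast]
            have := hUC j r hr t hmem
            rw [this] at hUt
            linear_combination hUt
          have : r = r₀ := by
            have h2 := congrArg ZMod.val this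
            rwa [ZMod.val_cast_of_lt hr, ZMod.val_cast_of_lt hr₀] at h2
          subst this
          exact hmem
      · exact hval t
  rw [countFreq, key]
  split_ifs with hcase
  · rw [Finset.card_insert_of_notMem (zero_notMem_cycClass hα hp2 r₀),
      cycClass_card hα hp2 hpMf hM hf hr₀]
  · rw [cycClass_card hα hp2 hpMf hM hf hr₀]; omega

lemma sum_boole_zmod {N : ℕ} [NeZero N] {F : Type*} [DecidableEq F]
    (X : ZMod N → F) (a : F) :
    countFreq X a = ∑ t : ZMod N, if X t = a then 1 else 0 := by
  rw [countFreq, Finset.card_filter]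

lemma natCast_fin_bijective {p : ℕ} [NeZero p] :
    Function.Bijective (fun t : Fin p => ((t : ℕ) : ZMod p)) := by
  rw [Fintype.bijective_iff_injective_and_card]
  refine ⟨fun x y h => ?_, by simp [ZMod.card]⟩
  have := congrArg ZMod.val h
  rwa [ZMod.val_cast_of_lt x.isLt, ZMod.val_cast_of_lt y.isLt, ← Fin.ext_iff] at this

lemma countFreq_fin {p : ℕ} [NeZero p] {F : Type*} [DecidableEq F]
    (X : ZMod p → F) (a : F) :
    countFreq X a = ∑ t : Fin p, if X ((t : ℕ) : ZMod p) = a then 1 else 0 := by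
  rw [sum_boole_zmod]
  exact (Fintype.sum_bijective _ natCast_fin_bijective _ _ (fun x => rfl)).symm

lemma countFreq_Y {p M : ℕ} [NeZero p] [NeZero (2 * p)] [NeZero M]
    (U : Fin M → ZMod p → ZMod M) (Y : Fin (M / 2) → ZMod (2 * p) → ZMod M)
    (hY : ∀ (i : Fin (M / 2)) (t0 t1 : ℕ), t0 < 2 → t1 < p →
      ∀ (hidx : 2 * (i : ℕ) + t0 < M),
      Y i ((2 * t1 + t0 : ℕ) : ZMod (2 * p)) = U ⟨2 * (i : ℕ) + t0, hidx⟩ ((t1 : ℕ) : ZMod p))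
    (i : Fin (M / 2)) (a : ZMod M) (h0 : 2 * (i : ℕ) < M) (h1 : 2 * (i : ℕ) + 1 < M) :
    countFreq (Y i) a
      = countFreq (U ⟨2 * (i : ℕ), h0⟩) a + countFreq (U ⟨2 * (i : ℕ) + 1, h1⟩) a := by
  have hppos : 0 < p := Nat.pos_of_ne_zero (NeZero.ne p)
  set e : Fin p × Fin 2 → ZMod (2 * p) :=
    fun x => ((2 * (x.1 : ℕ) + (x.2 : ℕ) : ℕ) : ZMod (2 * p)) with he
  have hbij : Function.Bijective e := by
    rw [Fintype.bijective_iff_injective_and_card]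
    constructor
    · intro x y h
      have hx : 2 * (x.1 : ℕ) + (x.2 : ℕ) < 2 * p := by
        have := x.1.isLt; have := x.2.isLt; omega
      have hy : 2 * (y.1 : ℕ) + (y.2 : ℕ) < 2 * p := by
        have := y.1.isLt; have := y.2.isLt; omega
      have := congrArg ZMod.val h
      rw [he] at this
      simp only [ZMod.val_cast_of_lt hx, ZMod.val_cast_of_lt hy] at this
      have h2x := x.2.isLt; have h2y := y.2.isLt
      ext
      · omega
      · omega
    · simp [ZMod.card]; ring
  have keyA : ∀ t1 : Fin p, Y i (e (t1, 0)) = U ⟨2 * (i : ℕ), h0⟩ ((t1 : ℕ) : ZMod p) := by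
    intro t1
    have h := hY i 0 t1 (by omega) t1.isLt (by omega)
    rw [he]
    simp only [Fin.val_zero, add_zero]
    rw [add_zero] at h
    exact h
  have keyB : ∀ t1 : Fin p, Y i (e (t1, 1)) = U ⟨2 * (i : ℕ) + 1, h1⟩ ((t1 : ℕ) : ZMod p) := by
    intro t1
    have h := hY i 1 t1 (by omega) t1.isLt (by omega)
    rw [he]
    simp only [Fin.val_one]
    exact h
  calc countFreq (Y i) a = ∑ t : ZMod (2 * p), if Y i t = a then 1 else 0 :=
        sum_boole_zmod _ _
    _ = ∑ x : Fin p × Fin 2, if Y i (e x) = a then 1 else 0 :=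
        (Fintype.sum_bijective e hbij _ _ (fun x => rfl)).symm
    _ = ∑ t1 : Fin p, ∑ t0 : Fin 2, if Y i (e (t1, t0)) = a then 1 else 0 := by
        rw [Fintype.sum_prod_type]
    _ = ∑ t1 : Fin p, ((if U ⟨2 * (i : ℕ), h0⟩ ((t1 : ℕ) : ZMod p) = a then 1 else 0)
          + (if U ⟨2 * (i : ℕ) + 1, h1⟩ ((t1 : ℕ) : ZMod p) = a then 1 else 0)) := by
        refine Finset.sum_congr rfl fun t1 _ => ?_
        rw [Fin.sum_univ_two, keyA t1, keyB t1]
    _ = _ := by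
        rw [Finset.sum_add_distrib, ← countFreq_fin, ← countFreq_fin]

def Sa' {N L : ℕ} [NeZero N] {F : Type*} [DecidableEq F]
    (U : Fin L → ZMod N → F) : ℕ :=
  ∑ i : Fin L, ∑ τ ∈ Finset.univ \ {(0 : ZMod N)}, Hcorr (U i) (U i) τ
def Sc' {N L : ℕ} [NeZero N] {F : Type*} [DecidableEq F]
    (U : Fin L → ZMod N → F) : ℕ :=
  ∑ i : Fin L, ∑ j ∈ Finset.univ \ {i}, ∑ τ : ZMod N, Hcorr (U i) (U j) τ

lemma corr_decomp {N L : ℕ} [NeZero N] {F : Type*} [Fintype F] [DecidableEq F]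
    (U : Fin L → ZMod N → F) :
    Sa' U + Sc' U + L * N = ∑ a : F, (countFreqSet U a)^2 := by
  have total : ∑ i : Fin L, ∑ j : Fin L, ∑ τ : ZMod N, Hcorr (U i) (U j) τ
      = ∑ a : F, (countFreqSet U a)^2 := by
    calc ∑ i : Fin L, ∑ j : Fin L, ∑ τ : ZMod N, Hcorr (U i) (U j) τ
        = ∑ i : Fin L, ∑ j : Fin L, ∑ a : F, countFreq (U i) a * countFreq (U j) a := by
          refine Finset.sum_congr rfl fun i _ => Finset.sum_congr rfl fun j _ => ?_
          exact Hcorr_sum_eq (U i) (U j)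
      _ = ∑ i : Fin L, ∑ a : F, ∑ j : Fin L, countFreq (U i) a * countFreq (U j) a :=
          Finset.sum_congr rfl fun i _ => Finset.sum_comm
      _ = ∑ a : F, ∑ i : Fin L, ∑ j : Fin L, countFreq (U i) a * countFreq (U j) a :=
          Finset.sum_comm
      _ = ∑ a : F, (countFreqSet U a)^2 := by
          refine Finset.sum_congr rfl fun a _ => ?_
          rw [countFreqSet, sq, Finset.sum_mul_sum]
  have hj : ∀ i : Fin L, ∑ j : Fin L, ∑ τ : ZMod N, Hcorr (U i) (U j) τ
      = (∑ j ∈ Finset.univ \ {i}, ∑ τ : ZMod N, Hcorr (U i) (U j) τ)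
        + (N + ∑ τ ∈ Finset.univ \ {(0 : ZMod N)}, Hcorr (U i) (U i) τ) := by
    intro i
    rw [show (Finset.univ \ {i} : Finset (Fin L)) = Finset.univ.erase i from
      Finset.sdiff_singleton_eq_erase i Finset.univ,
      show (Finset.univ \ {(0 : ZMod N)} : Finset (ZMod N)) = Finset.univ.erase 0 from
      Finset.sdiff_singleton_eq_erase 0 Finset.univ]
    rw [← Finset.add_sum_erase _ _ (Finset.mem_univ i),
      ← Finset.add_sum_erase _ _ (Finset.mem_univ (0 : ZMod N)), Hcorr_self_zero]
    ring
  rw [← total, Finset.sum_congr rfl fun i _ => hj i, Finset.sum_add_distrib,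
    Finset.sum_add_distrib, Finset.sum_const, Finset.card_univ, Fintype.card_fin,
    smul_eq_mul]
  rw [Sa', Sc']
  ring

lemma zmod_eq_natCast_iff {M v : ℕ} [NeZero M] (a : ZMod M) (h : v < M) :
    a = (v : ZMod M) ↔ a.val = v := by
  constructor
  · rintro rfl; exact ZMod.val_cast_of_lt h
  · rintro rfl; simp [ZMod.natCast_val, ZMod.cast_id]

/-- Corollary 16, the interleaved Construction A set has optimal AHC. -/
theorem interleaved_constructionA_optimal_AHC (p M f : ℕ) [NeZero p] [NeZero (2 * p)]
    (hp : p.Prime) (hodd : Odd p)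
    (hM : 4 ≤ M) (hMeven : Even M) (hfodd : Odd f) (hpMf : p = M * f + 1)
    (α : ZMod p) (hα : ∀ x : ZMod p, x ≠ 0 → ∃ k : ℕ, α ^ k = x)
    (U : Fin M → ZMod p → ZMod M)
    (hU0 : ∀ i : Fin M, U i 0 = ((i : ℕ) : ZMod M))
    (hUC : ∀ (i : Fin M) (r : ℕ), r < M → ∀ t ∈ cycClass α M f r,
      U i t = (r : ZMod M) + ((i : ℕ) : ZMod M))
    (Y : Fin (M / 2) → ZMod (2 * p) → ZMod M)
    (hY : ∀ (i : Fin (M / 2)) (t0 t1 : ℕ), t0 < 2 → t1 < p →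
      ∀ (hidx : 2 * (i : ℕ) + t0 < M),
      Y i ((2 * t1 + t0 : ℕ) : ZMod (2 * p)) = U ⟨2 * (i : ℕ) + t0, hidx⟩ ((t1 : ℕ) : ZMod p)) :
    Aa Y / (2 * (p : ℚ) * (((M / 2 : ℕ) : ℚ) - 1)) + Ac Y / (2 * (p : ℚ) - 1)
      = (2 * (p : ℚ) * ((M / 2 : ℕ) : ℚ) - (M : ℚ))
        / ((M : ℚ) * (2 * (p : ℚ) - 1) * (((M / 2 : ℕ) : ℚ) - 1)) := by
  haveI : NeZero M := ⟨by omega⟩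
  have hf1 : f % 2 = 1 := Nat.odd_iff.mp hfodd
  have hM4 : 4 * 1 ≤ M * f := Nat.mul_le_mul (by omega) (by omega)
  have hp2 : 2 < p := by omega
  have hM0 : 0 < M := by omega
  have hf0 : 0 < f := by omega
  have hM2 : M % 2 = 0 := Nat.even_iff.mp hMeven
  have hMdvd : M / 2 * 2 = M := Nat.div_mul_cancel hMeven.two_dvd
  -- each frequency occurs exactly p times in Y
  have hfreq : ∀ a : ZMod M, countFreqSet Y a = p := by
    intro a
    have havlt : a.val < M := ZMod.val_lt a
    set i₀ : Fin (M / 2) := ⟨a.val / 2, by omega⟩ with hi₀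
    have step : ∀ i : Fin (M / 2), countFreq (Y i) a
        = 2 * f + (if i = i₀ then 1 else 0) := by
      intro i
      have hiM := i.isLt
      have h0 : 2 * (i : ℕ) < M := by omega
      have h1 : 2 * (i : ℕ) + 1 < M := by omega
      rw [countFreq_Y U Y hY i a h0 h1,
        countFreq_U hp hp2 hpMf hM0 hf0 hα U hU0 hUC ⟨2 * (i : ℕ), h0⟩ a,
        countFreq_U hp hp2 hpMf hM0 hf0 hα U hU0 hUC ⟨2 * (i : ℕ) + 1, h1⟩ a]
      simp only [Fin.val_mk]
      have c1 := zmod_eq_natCast_iff a h0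
      have c2 := zmod_eq_natCast_iff a h1
      have c3 : (i = i₀) ↔ (i : ℕ) = a.val / 2 := ⟨fun h => by rw [h], fun h => Fin.ext h⟩
      rw [if_congr c1 rfl rfl, if_congr c2 rfl rfl, if_congr c3 rfl rfl]
      split_ifs <;> omega
    rw [countFreqSet, Finset.sum_congr rfl fun i _ => step i, Finset.sum_add_distrib,
      Finset.sum_const, Finset.card_univ, Fintype.card_fin, smul_eq_mul]
    have hone : (∑ i : Fin (M / 2), if i = i₀ then 1 else 0) = 1 := by simp
    rw [hone]
    have hmf : M / 2 * (2 * f) = M * f := by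
      calc M / 2 * (2 * f) = (M / 2 * 2) * f := by ring
        _ = M * f := by rw [hMdvd]
    omega
  -- sum of squares of frequency counts
  have hsq : ∑ a : ZMod M, (countFreqSet Y a) ^ 2 = M * p ^ 2 := by
    rw [Finset.sum_congr rfl fun a _ => by rw [hfreq a], Finset.sum_const,
      Finset.card_univ, ZMod.card, smul_eq_mul]
  have hdecomp := corr_decomp Y
  rw [hsq] at hdecomp
  have hmp : M / 2 * (2 * p) = M * p := by
    calc M / 2 * (2 * p) = (M / 2 * 2) * p := by ring
      _ = M * p := by rw [hMdvd]
  have hnat : Sa Y + Sc Y + M * p = M * p ^ 2 := by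
    have hSa : Sa Y = Sa' Y := rfl
    have hSc : Sc Y = Sc' Y := rfl
    rw [hSa, hSc]
    omega
  have hqq : (Sa Y : ℚ) = (M : ℚ) * (p : ℚ) ^ 2 - (M : ℚ) * (p : ℚ) - (Sc Y : ℚ) := by
    have := congrArg (Nat.cast : ℕ → ℚ) hnat
    push_cast at this
    linarith
  have hMQ : (M : ℚ) = 2 * ((M / 2 : ℕ) : ℚ) := by
    have h : M = 2 * (M / 2) := by omega
    exact_mod_cast congrArg (Nat.cast : ℕ → ℚ) h
  have hLq : (2 : ℚ) ≤ ((M / 2 : ℕ) : ℚ) := by exact_mod_cast (by omega : 2 ≤ M / 2)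
  have hpq : (3 : ℚ) ≤ (p : ℚ) := by exact_mod_cast (by omega : 3 ≤ p)
  have hLne : ((M / 2 : ℕ) : ℚ) ≠ 0 := by linarith
  have hLne1 : ((M / 2 : ℕ) : ℚ) - 1 ≠ 0 := by
    intro h; nlinarith
  have hpne : (p : ℚ) ≠ 0 := by linarith
  have hpne1 : 2 * (p : ℚ) - 1 ≠ 0 := by
    intro h; nlinarith
  simp only [Aa, Ac, hqq]
  push_cast
  rw [hMQ]
  field_simp
  ring
end

section
/- Let N ≥ 3 be an odd integer with smallest prime factor p_1, and for 0 ≤ i ≤ p_1 − 2 define X_i : Z_N → Z_N by X_i(t) = (i+1)·t (mod N). Then for all 0 ≤ i, j ≤ p_1 − 2 and 0 ≤ τ ≤ N−1: H_{X_i,X_j}(τ) = N if i = j and τ = 0; H_{X_i,X_j}(τ) = 0 if i = j and τ ≠ 0; and H_{X_i,X_j}(τ) = 1 if i ≠ j. -/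
open Finset

lemma unit_of_lt_minFac (N k : ℕ) [NeZero N] (hk : 0 < k) (hk' : k < N.minFac) :
    IsUnit ((k : ZMod N)) := by
  rw [ZMod.isUnit_iff_coprime]
  by_contra h
  have hg : 2 ≤ Nat.gcd k N := by
    rcases Nat.lt_or_ge (Nat.gcd k N) 2 with h2 | h2
    · interval_cases h' : Nat.gcd k N
      · have := Nat.eq_zero_of_gcd_eq_zero_left h'
        omega
      · exact absurd h' h
    · exact h2
  have h1 : N.minFac ≤ Nat.gcd k N :=
    Nat.minFac_le_of_dvd hg (Nat.gcd_dvd_right k N)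
  have h2 : Nat.gcd k N ≤ k := Nat.le_of_dvd hk (Nat.gcd_dvd_left k N)
  omega

/-- the Hamming correlation of the sequences `X_i(t) = (i+1)t mod N`. -/
theorem cao_correlation (N : ℕ) [NeZero N] (hN : 3 ≤ N) (hodd : Odd N)
    (X : Fin (N.minFac - 1) → ZMod N → ZMod N)
    (hX : ∀ (i : Fin (N.minFac - 1)) (t : ZMod N),
      X i t = (((i : ℕ) + 1 : ℕ) : ZMod N) * t) :
    ∀ (i j : Fin (N.minFac - 1)) (τ : ZMod N),
      Hcorr (X i) (X j) τ = if i = j then (if τ = 0 then N else 0) else 1 := by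
  intro i j τ
  have hpf : 2 ≤ N.minFac := (Nat.minFac_prime (by omega)).two_le
  have hi1 : (i : ℕ) + 1 < N.minFac := by have := i.isLt; omega
  have hj1 : (j : ℕ) + 1 < N.minFac := by have := j.isLt; omega
  have hui : IsUnit ((((i : ℕ) + 1 : ℕ) : ZMod N)) :=
    unit_of_lt_minFac N _ (by omega) hi1
  have huj : IsUnit ((((j : ℕ) + 1 : ℕ) : ZMod N)) :=
    unit_of_lt_minFac N _ (by omega) hj1
  by_cases hij : i = j
  · subst hij
    simp only [if_pos rfl]
    have key : ∀ t : ZMod N, (X i t = X i (t + τ)) ↔ τ = 0 := by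
      intro t
      rw [hX, hX, mul_add]
      constructor
      · intro h
        have h2 : (((i : ℕ) + 1 : ℕ) : ZMod N) * τ = 0 := by
          have := h.symm
          linear_combination this
        have : ((((i : ℕ) + 1 : ℕ) : ZMod N))⁻¹ * ((((i : ℕ) + 1 : ℕ) : ZMod N) * τ) = 0 := by
          rw [h2, mul_zero]
        rwa [← mul_assoc, ZMod.inv_mul_of_unit _ hui, one_mul] at this
      · intro h; rw [h]; ring
    by_cases hτ : τ = 0
    · rw [if_pos hτ]
      unfold Hcorr
      rw [Finset.filter_true_of_mem (fun t _ => (key t).mpr hτ)]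
      simp [ZMod.card]
    · rw [if_neg hτ]
      unfold Hcorr
      rw [Finset.filter_false_of_mem (fun t _ => fun h => hτ ((key t).mp h))]
      simp
  · rw [if_neg hij]
    set d : ZMod N := (((i : ℕ) + 1 : ℕ) : ZMod N) - (((j : ℕ) + 1 : ℕ) : ZMod N) with hd
    have hdu : IsUnit d := by
      rcases Nat.lt_or_ge (j : ℕ) (i : ℕ) with hlt | hge
      · have : d = (((i : ℕ) - (j : ℕ) : ℕ) : ZMod N) := by
          rw [hd, Nat.cast_sub (by omega)]
          push_cast
          ring
        rw [this]
        exact unit_of_lt_minFac N _ (by omega) (by omega)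
      · have hlt' : (i : ℕ) < (j : ℕ) := by
          rcases Nat.lt_or_ge (i : ℕ) (j : ℕ) with h | h
          · exact h
          · exact absurd (Fin.ext (by omega)) hij
        have : d = -(((j : ℕ) - (i : ℕ) : ℕ) : ZMod N) := by
          rw [hd, Nat.cast_sub (by omega)]
          push_cast
          ring
        rw [this]
        exact (unit_of_lt_minFac N _ (by omega) (by omega)).neg
    have key : ∀ t : ZMod N,
        (X i t = X j (t + τ)) ↔ t = d⁻¹ * ((((j : ℕ) + 1 : ℕ) : ZMod N) * τ) := by
      intro t
      rw [hX, hX]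
      constructor
      · intro h
        have h2 : d * t = (((j : ℕ) + 1 : ℕ) : ZMod N) * τ := by
          rw [hd]; linear_combination h
        rw [← h2, ← mul_assoc, ZMod.inv_mul_of_unit _ hdu, one_mul]
      · intro h
        rw [h]
        have : d * (d⁻¹ * ((((j : ℕ) + 1 : ℕ) : ZMod N) * τ))
            = (((j : ℕ) + 1 : ℕ) : ZMod N) * τ := by
          rw [← mul_assoc, ZMod.mul_inv_of_unit _ hdu, one_mul]
        rw [hd] at this
        linear_combination this
    unfold Hcorr
    have : Finset.univ.filter (fun t => X i t = X j (t + τ))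
        = {d⁻¹ * ((((j : ℕ) + 1 : ℕ) : ZMod N) * τ)} := by
      ext t
      simp [key t]
    rw [this, Finset.card_singleton]
end
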